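/- (Three long links.) Let a = (a_1,…,a_n) with n ≥ 5 and a_1 ≥ a_2 ≥ … ≥ a_n > 0, set L := Σ_{i=1}^n a_i, and assume that a_i + a_j > L/2 for every pair of distinct indices i, j ∈ {1,2,3}. Then P(a) ⊆ Q(a); in particular, the diagonal space satisfies DS(a) = P(a) ∩ Q(a) = P(a). -/

import Mathlib

/-!
Unwinding the upper inequalities of `P(a)` from `L_{n-1} = a_n` gives
`L_m ≤ a_{m+1} + ⋯ + a_n ≤ L - a_1 - a_2 < L/2 < a_1 + a_2 ≤ R_m^max`.
Since `a_1` is the longest link, `R_m^min = 2 a_1 - (a_1 + ⋯ + a_m)`. For `m ≥ 3` this is at most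
`a_1 - a_2 - a_3 < 0`, because `a_2 + a_3 > L/2`; for `m = 2` it is
`a_1 - a_2 ≤ a_3 - (a_4 + ⋯ + a_n) ≤ a_3 - L_3 ≤ L_2`, by the same inequality and the lower
constraint of `P(a)` at `L_2`.
-/

/-- `R_k^min = max_{1 ≤ i ≤ k} (2 a_i − Σ_{j=1}^k a_j)`. -/
noncomputable def Rmin (a : ℕ → ℝ) (k : ℕ) : ℝ :=
  sSup ((fun i => 2 * a i - ∑ j ∈ Finset.Icc 1 k, a j) '' Set.Icc 1 k)

open Finset

theorem sum_Icc_one_add_sum_Ioc (a : ℕ → ℝ) {m n : ℕ} (hmn : m ≤ n) :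
    ∑ j ∈ Icc 1 m, a j + ∑ j ∈ Ioc m n, a j = ∑ j ∈ Icc 1 n, a j := by
  simp only [show ∀ k, Icc 1 k = Ioc 0 k from Icc_add_one_left_eq_Ioc 0]
  exact sum_Ioc_consecutive a m.zero_le hmn

theorem sum_Ioc_eq_add_sum_Ioc (a : ℕ → ℝ) {m n : ℕ} (hmn : m < n) :
    ∑ j ∈ Ioc m n, a j = a (m + 1) + ∑ j ∈ Ioc (m + 1) n, a j := by
  rw [← insert_Ioc_add_one_left_eq_Ioc hmn, sum_insert (by simp)]

theorem sum_Icc_one_two (a : ℕ → ℝ) : ∑ j ∈ Icc 1 2, a j = a 1 + a 2 := by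
  rw [sum_Icc_succ_top (by norm_num), Icc_self, sum_singleton]

theorem sum_Icc_one_three (a : ℕ → ℝ) : ∑ j ∈ Icc 1 3, a j = a 1 + a 2 + a 3 := by
  rw [sum_Icc_succ_top (by norm_num), sum_Icc_one_two]

theorem sum_Icc_one_mono {a : ℕ → ℝ} {n : ℕ} (ha : ∀ i, 1 ≤ i → i ≤ n → 0 ≤ a i) {m k : ℕ}
    (hmk : m ≤ k) (hkn : k ≤ n) : ∑ j ∈ Icc 1 m, a j ≤ ∑ j ∈ Icc 1 k, a j :=
  sum_le_sum_of_subset_of_nonneg (Icc_subset_Icc_right hmk) fun i hi _ =>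
    ha i (mem_Icc.1 hi).1 ((mem_Icc.1 hi).2.trans hkn)

theorem le_sum_Ioc_of_le_add_succ {L a : ℕ → ℝ} {n p : ℕ} (hlast : L (n - 1) = a n)
    (hstep : ∀ m, p ≤ m → m + 2 ≤ n → L m ≤ L (m + 1) + a (m + 1))
    {m : ℕ} (hpm : p ≤ m) (hmn : m + 1 ≤ n) : L m ≤ ∑ j ∈ Ioc m n, a j := by
  obtain ⟨n, rfl⟩ : ∃ n', n = n' + 1 := ⟨n - 1, by omega⟩
  refine Nat.decreasingInduction' (P := fun k => L k ≤ ∑ j ∈ Ioc k (n + 1), a j)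
    (fun k hk hmk ih => ?_) (show m ≤ n by omega) ?_
  · rw [sum_Ioc_eq_add_sum_Ioc a (by omega)]
    linarith [hstep k (by omega) (by omega)]
  · simpa [Nat.Ioc_succ_singleton] using hlast.le

theorem Rmin_eq_of_le_first {a : ℕ → ℝ} {m : ℕ} (hm : 1 ≤ m)
    (hmax : ∀ i, 1 ≤ i → i ≤ m → a i ≤ a 1) : Rmin a m = 2 * a 1 - ∑ j ∈ Icc 1 m, a j := by
  refine IsGreatest.csSup_eq ⟨⟨1, ⟨le_rfl, hm⟩, rfl⟩, ?_⟩
  rintro _ ⟨i, hi, rfl⟩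
  linarith [hmax i hi.1 hi.2]

section LongLinks

variable {a : ℕ → ℝ} {n m : ℕ}

theorem sum_Ioc_le_sum_Icc_one (ha : ∀ i, 1 ≤ i → i ≤ n → 0 ≤ a i)
    (h12 : (∑ j ∈ Icc 1 n, a j) / 2 < a 1 + a 2) (h2m : 2 ≤ m) (hmn : m ≤ n) :
    ∑ j ∈ Ioc m n, a j ≤ ∑ j ∈ Icc 1 m, a j := by
  have hsplit := sum_Icc_one_add_sum_Ioc a hmn
  have h2 := sum_Icc_one_mono ha h2m hmn
  rw [sum_Icc_one_two] at h2
  linarith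

theorem Rmin_nonpos_of_three_le (ha : ∀ i, 1 ≤ i → i ≤ n → 0 ≤ a i)
    (hmax : ∀ i, 1 ≤ i → i ≤ n → a i ≤ a 1) (h23 : (∑ j ∈ Icc 1 n, a j) / 2 < a 2 + a 3)
    (h3m : 3 ≤ m) (hmn : m ≤ n) : Rmin a m ≤ 0 := by
  rw [Rmin_eq_of_le_first (by omega) fun i h1 h2 => hmax i h1 (h2.trans hmn)]
  have h3 := sum_Icc_one_mono ha h3m hmn
  have h3n := sum_Icc_one_mono ha (h3m.trans hmn) le_rfl
  rw [sum_Icc_one_three] at h3 h3n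
  linarith

theorem Rmin_two_le_sub_sum_Ioc (hmax : ∀ i, 1 ≤ i → i ≤ n → a i ≤ a 1)
    (h23 : (∑ j ∈ Icc 1 n, a j) / 2 < a 2 + a 3) (h3n : 3 ≤ n) :
    Rmin a 2 ≤ a 3 - ∑ j ∈ Ioc 3 n, a j := by
  rw [Rmin_eq_of_le_first (by norm_num) fun i h1 h2 => hmax i h1 (by omega), sum_Icc_one_two]
  have hsplit := sum_Icc_one_add_sum_Ioc a h3n
  rw [sum_Icc_one_three] at hsplit
  linarith

end LongLinks

theorem threeLongLinks_P_subset_Q_general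
    (n : ℕ) (a : ℕ → ℝ)
    (ha : ∀ i, 1 ≤ i → i ≤ n → 0 < a i)
    (hord : ∀ i j, 1 ≤ i → i ≤ j → j ≤ n → a j ≤ a i)
    (hlong : ∀ i j, i ∈ ({1, 2, 3} : Set ℕ) → j ∈ ({1, 2, 3} : Set ℕ) → i ≠ j →
      (∑ l ∈ Finset.Icc 1 n, a l) / 2 < a i + a j) :
    ∀ L : ℕ → ℝ,
      (∀ k, 2 ≤ k → k ≤ n - 2 → 0 ≤ L k) →
      L (n - 1) = a n →
      (∀ k, 1 ≤ k → k ≤ n - 3 →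
        |L (n - k) - a (n - k)| ≤ L (n - k - 1) ∧
        L (n - k - 1) ≤ L (n - k) + a (n - k)) →
      (∀ k, 1 ≤ k → k ≤ n - 3 →
        max 0 (Rmin a (n - k - 1)) ≤ L (n - k - 1) ∧
        L (n - k - 1) ≤ ∑ j ∈ Finset.Icc 1 (n - k - 1), a j) := by
  intro L hL0 hlast hchain k hk1 hk2
  have hnonneg : ∀ i, 1 ≤ i → i ≤ n → 0 ≤ a i := fun i h1 h2 => (ha i h1 h2).le
  have hmax : ∀ i, 1 ≤ i → i ≤ n → a i ≤ a 1 := fun i h1 h2 => hord 1 i le_rfl h1 h2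
  have h12 := hlong 1 2 (by simp) (by simp) (by norm_num)
  have h23 := hlong 2 3 (by simp) (by simp) (by norm_num)
  have hstep : ∀ m, 2 ≤ m → m + 2 ≤ n →
      |L (m + 1) - a (m + 1)| ≤ L m ∧ L m ≤ L (m + 1) + a (m + 1) := fun m h2m hmn => by
    have := hchain (n - m - 1) (by omega) (by omega)
    rwa [show n - (n - m - 1) - 1 = m by omega, show n - (n - m - 1) = m + 1 by omega] at this
  have htail : ∀ m, 2 ≤ m → m + 1 ≤ n → L m ≤ ∑ j ∈ Ioc m n, a j := fun m h2m hmn =>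
    le_sum_Ioc_of_le_add_succ hlast (fun m h2m hmn => (hstep m h2m hmn).2) h2m hmn
  generalize hm : n - k - 1 = m
  have h2m : 2 ≤ m := by omega
  have hmn : m + 2 ≤ n := by omega
  refine ⟨max_le (hL0 m h2m (by omega)) ?_,
    (htail m h2m (by omega)).trans (sum_Ioc_le_sum_Icc_one hnonneg h12 h2m (by omega))⟩
  rcases h2m.eq_or_lt with rfl | h3m
  · calc Rmin a 2 ≤ a 3 - ∑ j ∈ Ioc 3 n, a j := Rmin_two_le_sub_sum_Ioc hmax h23 (by omega)
      _ ≤ L 2 := by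
        linarith [htail 3 (by norm_num) (by omega), neg_le_abs (L 3 - a 3), (hstep 2 le_rfl hmn).1]
  · exact (Rmin_nonpos_of_three_le hnonneg hmax h23 h3m (by omega)).trans (hL0 m h2m (by omega))

/-- Three long links: if the links are ordered `a_1 ≥ a_2 ≥ … ≥ a_n > 0`, `n ≥ 5`, and
`a_i + a_j > L/2` (with `L = Σ a_i`) for all distinct `i, j ∈ {1,2,3}`, then the polytope
`P(a)` (nonnegative vectors `(L_2,…,L_{n-2})` with `L_{n-1} := a_n` satisfying the nested
inequalities `|L_{n-k} − a_{n-k}| ≤ L_{n-k-1} ≤ L_{n-k} + a_{n-k}` for `1 ≤ k ≤ n−3`) is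
contained in the cuboid `Q(a)` given by
`max(0, R_{n-k-1}^min) ≤ L_{n-k-1} ≤ R_{n-k-1}^max`; in particular `DS(a) = P(a) ∩ Q(a) = P(a)`. -/
theorem threeLongLinks_P_subset_Q
    (n : ℕ) (hn : 5 ≤ n) (a : ℕ → ℝ)
    (ha : ∀ i, 1 ≤ i → i ≤ n → 0 < a i)
    (hord : ∀ i j, 1 ≤ i → i ≤ j → j ≤ n → a j ≤ a i)
    (hlong : ∀ i j, i ∈ ({1, 2, 3} : Set ℕ) → j ∈ ({1, 2, 3} : Set ℕ) → i ≠ j →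
      (∑ l ∈ Finset.Icc 1 n, a l) / 2 < a i + a j) :
    ∀ L : ℕ → ℝ,
      (∀ k, 2 ≤ k → k ≤ n - 2 → 0 ≤ L k) →
      L (n - 1) = a n →
      (∀ k, 1 ≤ k → k ≤ n - 3 →
        |L (n - k) - a (n - k)| ≤ L (n - k - 1) ∧
        L (n - k - 1) ≤ L (n - k) + a (n - k)) →
      (∀ k, 1 ≤ k → k ≤ n - 3 →
        max 0 (Rmin a (n - k - 1)) ≤ L (n - k - 1) ∧
        L (n - k - 1) ≤ ∑ j ∈ Finset.Icc 1 (n - k - 1), a j) :=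
  threeLongLinks_P_subset_Q_general n a ha hord hlong
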